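/- arXiv:2504.08658 — 2 statements merged into one kernel-verified Lean document; each statement's English description precedes it below -/
import Mathlib

section
/- Let u : ℝ^d → ℝ be measurable with ∫ |u|^2 dx = 1, S := ∫ |u|^2 log|u|^2 dx finite, and K := ∫ |x|^2 |u|^2 dx finite. Then |u|^2 log|u|^2 ∈ L^1(ℝ^d) and ∫ | |u|^2 log|u|^2 | dx ≤ S + K + d log(2π) + 2/e. -/
/-!
Write `F = u² log u²`, so that `|F| = F + 2 F⁻`. For the standard Gaussian density `γ ≤ 1`, the
Fenchel–Young inequality `t log γ - t log t ≤ γ / e` gives `(t log t)⁻ ≤ -t log γ + γ / e`.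
Integrating with `t = u²` and `-log γ(x) = |x|² / 2 + (d / 2) log (2π)` bounds `∫ F⁻` by
`K / 2 + (d / 2) log (2π) + 1 / e`.
-/

open MeasureTheory Real

lemma mul_log_sub_mul_log_le {t g : ℝ} (ht : 0 ≤ t) (hg : 0 < g) :
    t * log g - t * log t ≤ g / exp 1 := by
  rcases ht.eq_or_lt with rfl | ht
  · simp only [zero_mul, sub_zero]; positivity
  have hlog := log_le_sub_one_of_pos (show 0 < g / (exp 1 * t) by positivity)
  rw [log_div hg.ne' (by positivity), log_mul (exp_pos 1).ne' ht.ne', log_exp] at hlog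
  calc t * log g - t * log t = t * (log g - (1 + log t)) + t := by ring
    _ ≤ t * (g / (exp 1 * t) - 1) + t := by gcongr
    _ = g / exp 1 := by field_simp; ring

lemma negPart_mul_log_le {t g : ℝ} (ht : 0 ≤ t) (hg₀ : 0 < g) (hg₁ : g ≤ 1) :
    (t * log t)⁻ ≤ -(t * log g) + g / exp 1 := by
  have hlog : t * log g ≤ 0 := mul_nonpos_of_nonneg_of_nonpos ht (log_nonpos hg₀.le hg₁)
  rw [negPart_def]
  exact max_le (by linarith [mul_log_sub_mul_log_le ht hg₀])
    (by linarith [div_nonneg hg₀.le (exp_pos 1).le])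

section CrossEntropy

variable {α : Type*} [MeasurableSpace α] {μ : Measure α}

theorem integral_negPart_mul_log_le {f g : α → ℝ} (hf : ∀ x, 0 ≤ f x) (hg₀ : ∀ x, 0 < g x)
    (hg₁ : ∀ x, g x ≤ 1) (hg : Integrable g μ) (hfg : Integrable (fun x => f x * log (g x)) μ) :
    ∫ x, (f x * log (f x))⁻ ∂μ ≤ -∫ x, f x * log (g x) ∂μ + (∫ x, g x ∂μ) / exp 1 := by
  calc ∫ x, (f x * log (f x))⁻ ∂μ ≤ ∫ x, (-(f x * log (g x)) + g x / exp 1) ∂μ :=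
        integral_mono_of_nonneg (.of_forall fun x => negPart_nonneg _)
          (hfg.neg.add (hg.div_const _))
          (.of_forall fun x => negPart_mul_log_le (hf x) (hg₀ x) (hg₁ x))
    _ = -∫ x, f x * log (g x) ∂μ + (∫ x, g x ∂μ) / exp 1 := by
        rw [integral_add (f := fun x => -(f x * log (g x))) hfg.neg (hg.div_const _),
          integral_neg, integral_div]

end CrossEntropy

section StdGaussian

variable (V : Type*) [NormedAddCommGroup V] [InnerProductSpace ℝ V]

noncomputable def stdGaussianPDF (x : V) : ℝ :=
  (2 * π) ^ (-(Module.finrank ℝ V / 2 : ℝ)) * exp (-(‖x‖ ^ 2 / 2))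

variable {V}

lemma stdGaussianPDF_pos (x : V) : 0 < stdGaussianPDF V x := by
  unfold stdGaussianPDF; positivity

lemma stdGaussianPDF_le_one (x : V) : stdGaussianPDF V x ≤ 1 := by
  have h2π : 1 ≤ 2 * π := by linarith [pi_gt_three]
  exact mul_le_one₀ (rpow_le_one_of_one_le_of_nonpos h2π (neg_nonpos.2 (by positivity)))
    (exp_nonneg _) (exp_le_one_iff.2 (neg_nonpos.2 (by positivity)))

lemma log_stdGaussianPDF (x : V) :
    log (stdGaussianPDF V x) = -(‖x‖ ^ 2 / 2 + Module.finrank ℝ V / 2 * log (2 * π)) := by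
  rw [stdGaussianPDF, log_mul (by positivity) (by positivity), log_exp,
    log_rpow (by positivity)]
  ring

lemma mul_log_stdGaussianPDF (f : V → ℝ) (x : V) :
    f x * log (stdGaussianPDF V x)
      = -(1 / 2 * (‖x‖ ^ 2 * f x) + Module.finrank ℝ V / 2 * log (2 * π) * f x) := by
  rw [log_stdGaussianPDF]; ring

variable [FiniteDimensional ℝ V] [MeasurableSpace V] [BorelSpace V]

lemma integral_stdGaussianPDF : ∫ x, stdGaussianPDF V x = 1 := by
  have hgauss : ∫ x : V, exp (-(‖x‖ ^ 2 / 2)) = (2 * π) ^ (Module.finrank ℝ V / 2 : ℝ) := by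
    convert GaussianFourier.integral_rexp_neg_mul_sq_norm (V := V) (b := 1 / 2) (by norm_num)
      using 4 <;> ring
  simp_rw [stdGaussianPDF]
  rw [integral_const_mul, hgauss, rpow_neg (by positivity), inv_mul_cancel₀ (by positivity)]

lemma integrable_stdGaussianPDF : Integrable (stdGaussianPDF V) :=
  .of_integral_ne_zero (by rw [integral_stdGaussianPDF]; exact one_ne_zero)

variable {f : V → ℝ} (hf : Integrable f) (hK : Integrable fun x => ‖x‖ ^ 2 * f x)
include hf hK

lemma integrable_mul_log_stdGaussianPDF :
    Integrable fun x => f x * log (stdGaussianPDF V x) := by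
  simp_rw [mul_log_stdGaussianPDF]
  exact ((hK.const_mul _).add (hf.const_mul _)).neg

lemma integral_mul_log_stdGaussianPDF :
    -∫ x, f x * log (stdGaussianPDF V x)
      = 1 / 2 * (∫ x, ‖x‖ ^ 2 * f x) + Module.finrank ℝ V / 2 * log (2 * π) * ∫ x, f x := by
  simp_rw [mul_log_stdGaussianPDF]
  rw [integral_neg, neg_neg, integral_add (hK.const_mul _) (hf.const_mul _), integral_const_mul,
    integral_const_mul]

theorem integral_negPart_mul_log_le_second_moment (hf₀ : ∀ x, 0 ≤ f x) :
    ∫ x, (f x * log (f x))⁻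
      ≤ 1 / 2 * (∫ x, ‖x‖ ^ 2 * f x) + Module.finrank ℝ V / 2 * log (2 * π) * (∫ x, f x)
        + 1 / exp 1 := by
  have h := integral_negPart_mul_log_le hf₀ stdGaussianPDF_pos stdGaussianPDF_le_one
    integrable_stdGaussianPDF (integrable_mul_log_stdGaussianPDF hf hK)
  rwa [integral_mul_log_stdGaussianPDF hf hK, integral_stdGaussianPDF] at h

end StdGaussian

theorem stmt_4_general (d : ℕ) (u : EuclideanSpace ℝ (Fin d) → ℝ)
    (hnorm : ∫ x, u x ^ 2 = 1)
    (hS : Integrable (fun x => u x ^ 2 * Real.log (u x ^ 2)))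
    (hK : Integrable (fun x => ‖x‖ ^ 2 * u x ^ 2)) :
    Integrable (fun x => |u x ^ 2 * Real.log (u x ^ 2)|) ∧
    ∫ x, |u x ^ 2 * Real.log (u x ^ 2)|
      ≤ (∫ x, u x ^ 2 * Real.log (u x ^ 2)) + (∫ x, ‖x‖ ^ 2 * u x ^ 2)
        + d * Real.log (2 * Real.pi) + 2 / Real.exp 1 := by
  have hu : Integrable fun x => u x ^ 2 := .of_integral_ne_zero (by rw [hnorm]; exact one_ne_zero)
  have hneg := integral_negPart_mul_log_le_second_moment hu hK fun x => sq_nonneg (u x)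
  rw [hnorm, finrank_euclideanSpace_fin] at hneg
  refine ⟨hS.abs, ?_⟩
  rw [integral_abs_eq_two_mul_integral_negPart_add_integral hS]
  linarith [show (2 : ℝ) / exp 1 = 2 * (1 / exp 1) by ring]

theorem stmt_4 (d : ℕ) (u : EuclideanSpace ℝ (Fin d) → ℝ)
    (hmeas : Measurable u)
    (hnorm : ∫ x, u x ^ 2 = 1)
    (hS : Integrable (fun x => u x ^ 2 * Real.log (u x ^ 2)))
    (hK : Integrable (fun x => ‖x‖ ^ 2 * u x ^ 2)) :
    Integrable (fun x => |u x ^ 2 * Real.log (u x ^ 2)|) ∧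
    ∫ x, |u x ^ 2 * Real.log (u x ^ 2)|
      ≤ (∫ x, u x ^ 2 * Real.log (u x ^ 2)) + (∫ x, ‖x‖ ^ 2 * u x ^ 2)
        + d * Real.log (2 * Real.pi) + 2 / Real.exp 1 :=
  stmt_4_general d u hnorm hS hK
end

section
/- Let d ≥ 1 and let v ∈ H^1(ℝ^d, dγ) with ∫ |v|^2 dγ = 1 and ∫ |x|^2 |v|^2 dγ ≤ d. If the improved inequality δ[v] ≥ φ(∫|v|^2 log|v|^2 dγ + d/2 − (1/2)∫|x|^2|v|^2 dγ) holds with φ(t) = (d/4)(e^{2t/d}−1−2t/d), then δ[v] ≥ (1/(2d))(∫|v|^2 log|v|^2 dγ)^2 + (1/(8d))(d − ∫|x|^2|v|^2 dγ)^2, where δ[v] = ∫|∇v|^2 dγ − (1/2)∫|v|^2 log|v|^2 dγ. -/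
/-!
Since `∫ v² dγ = 1`, Jensen's inequality (in the pointwise form `u - 1 ≤ u log u`) makes
the entropy `A = ∫ v² log v² dγ` nonnegative, and the moment bound makes
`B = d - ∫ |x|² v² dγ` nonnegative. Hence `t = A + B / 2 ≥ 0`, and on `t ≥ 0` the bound
`eˢ ≥ 1 + s + s² / 2` gives `φ(t) ≥ t² / (2d)`; finally `(A + B / 2)² ≥ A² + B² / 4`.
-/

open MeasureTheory Real

theorem integral_gaussianDensity_eq_one (d : ℕ) :
    ∫ x : EuclideanSpace ℝ (Fin d), (2 * π) ^ (-(d : ℝ) / 2) * exp (-‖x‖ ^ 2 / 2) = 1 := by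
  have hgauss :
      ∫ x : EuclideanSpace ℝ (Fin d), exp (-(1 / 2) * ‖x‖ ^ 2) = (2 * π) ^ ((d : ℝ) / 2) := by
    rw [GaussianFourier.integral_rexp_neg_mul_sq_norm (by norm_num), finrank_euclideanSpace_fin]
    norm_num [div_div_eq_mul_div, mul_comm]
  have hexp (x : EuclideanSpace ℝ (Fin d)) : exp (-‖x‖ ^ 2 / 2) = exp (-(1 / 2) * ‖x‖ ^ 2) := by
    ring_nf
  simp_rw [hexp]
  rw [integral_const_mul, hgauss, ← rpow_add (by positivity), neg_div, neg_add_cancel, rpow_zero]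

theorem integral_mul_log_mul_nonneg {α : Type*} [MeasurableSpace α] {μ : Measure α}
    {f g : α → ℝ} (hg : 0 ≤ g) (hg1 : ∫ x, g x ∂μ = 1) (hf : 0 ≤ f)
    (hfg1 : ∫ x, f x * g x ∂μ = 1) :
    0 ≤ ∫ x, f x * log (f x) * g x ∂μ := by
  by_cases hint : Integrable (fun x ↦ f x * log (f x) * g x) μ
  · have hfg : Integrable (fun x ↦ f x * g x) μ := .of_integral_ne_zero (by rw [hfg1]; simp)
    have hg_int : Integrable g μ := .of_integral_ne_zero (by rw [hg1]; simp)
    have hpointwise : ∀ x, f x * g x - g x ≤ f x * log (f x) * g x := fun x ↦ by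
      simpa [sub_mul] using mul_le_mul_of_nonneg_right (self_sub_one_le_mul_log (hf x)) (hg x)
    calc 0 = ∫ x, (f x * g x - g x) ∂μ := by rw [integral_sub hfg hg_int, hfg1, hg1, sub_self]
      _ ≤ ∫ x, f x * log (f x) * g x ∂μ := integral_mono (hfg.sub hg_int) hint hpointwise
  · rw [integral_undef hint]

theorem sq_div_le_mul_exp_sub_one_sub {d t : ℝ} (hd : 0 < d) (ht : 0 ≤ t) :
    t ^ 2 / (2 * d) ≤ d / 4 * (exp (2 / d * t) - 1 - 2 / d * t) := by
  have hexp := quadratic_le_exp_of_nonneg (x := 2 / d * t) (by positivity)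
  calc t ^ 2 / (2 * d) = d / 4 * ((2 / d * t) ^ 2 / 2) := by field_simp; ring
    _ ≤ d / 4 * (exp (2 / d * t) - 1 - 2 / d * t) := by gcongr; linarith

theorem stmt_9_general (d : ℕ) (hd : 1 ≤ d)
    (g : EuclideanSpace ℝ (Fin d) → ℝ)
    (hg : g = fun x => (2 * Real.pi) ^ (-(d : ℝ) / 2) * Real.exp (-‖x‖ ^ 2 / 2))
    (v : EuclideanSpace ℝ (Fin d) → ℝ)
    (hnorm : ∫ x, v x ^ 2 * g x = 1)
    (hK : (∫ x, ‖x‖ ^ 2 * v x ^ 2 * g x) ≤ d)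
    (himp : (d / 4 : ℝ) *
        (Real.exp ((2 / d) * ((∫ x, v x ^ 2 * Real.log (v x ^ 2) * g x)
            + d / 2 - (1 / 2) * ∫ x, ‖x‖ ^ 2 * v x ^ 2 * g x))
          - 1 - (2 / d) * ((∫ x, v x ^ 2 * Real.log (v x ^ 2) * g x)
            + d / 2 - (1 / 2) * ∫ x, ‖x‖ ^ 2 * v x ^ 2 * g x))
      ≤ (∫ x, ‖gradient v x‖ ^ 2 * g x)
        - (1 / 2) * ∫ x, v x ^ 2 * Real.log (v x ^ 2) * g x) :
    (1 / (2 * d)) * (∫ x, v x ^ 2 * Real.log (v x ^ 2) * g x) ^ 2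
      + (1 / (8 * d)) * (d - ∫ x, ‖x‖ ^ 2 * v x ^ 2 * g x) ^ 2
    ≤ (∫ x, ‖gradient v x‖ ^ 2 * g x)
        - (1 / 2) * ∫ x, v x ^ 2 * Real.log (v x ^ 2) * g x := by
  have hd_pos : (0 : ℝ) < d := by exact_mod_cast hd
  have hg0 : 0 ≤ g := hg ▸ fun x ↦ by positivity
  have hg1 : ∫ x, g x = 1 := hg ▸ integral_gaussianDensity_eq_one d
  have hA : 0 ≤ ∫ x, v x ^ 2 * log (v x ^ 2) * g x :=
    integral_mul_log_mul_nonneg hg0 hg1 (fun x ↦ sq_nonneg (v x)) hnorm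
  set A := ∫ x, v x ^ 2 * log (v x ^ 2) * g x
  set K := ∫ x, ‖x‖ ^ 2 * v x ^ 2 * g x
  have hB : 0 ≤ d - K := by linarith
  have hcross : (A + d / 2 - 1 / 2 * K) ^ 2 / (2 * d)
      - (1 / (2 * d) * A ^ 2 + 1 / (8 * d) * (d - K) ^ 2) = A * (d - K) / (2 * d) := by
    field_simp; ring
  calc 1 / (2 * d) * A ^ 2 + 1 / (8 * d) * (d - K) ^ 2
      ≤ (A + d / 2 - 1 / 2 * K) ^ 2 / (2 * d) := by
        have : 0 ≤ A * (d - K) / (2 * d) := by positivity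
        linarith
    _ ≤ _ := sq_div_le_mul_exp_sub_one_sub hd_pos (by linarith)
    _ ≤ _ := himp

theorem stmt_9 (d : ℕ) (hd : 1 ≤ d)
    (g : EuclideanSpace ℝ (Fin d) → ℝ)
    (hg : g = fun x => (2 * Real.pi) ^ (-(d : ℝ) / 2) * Real.exp (-‖x‖ ^ 2 / 2))
    (v : EuclideanSpace ℝ (Fin d) → ℝ) (hmeas : Measurable v)
    (h2 : Integrable (fun x => v x ^ 2 * g x))
    (hgrad : Integrable (fun x => ‖gradient v x‖ ^ 2 * g x))
    (hent : Integrable (fun x => v x ^ 2 * Real.log (v x ^ 2) * g x))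
    (hmom : Integrable (fun x => ‖x‖ ^ 2 * v x ^ 2 * g x))
    (hnorm : ∫ x, v x ^ 2 * g x = 1)
    (hK : (∫ x, ‖x‖ ^ 2 * v x ^ 2 * g x) ≤ d)
    (himp : (d / 4 : ℝ) *
        (Real.exp ((2 / d) * ((∫ x, v x ^ 2 * Real.log (v x ^ 2) * g x)
            + d / 2 - (1 / 2) * ∫ x, ‖x‖ ^ 2 * v x ^ 2 * g x))
          - 1 - (2 / d) * ((∫ x, v x ^ 2 * Real.log (v x ^ 2) * g x)
            + d / 2 - (1 / 2) * ∫ x, ‖x‖ ^ 2 * v x ^ 2 * g x))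
      ≤ (∫ x, ‖gradient v x‖ ^ 2 * g x)
        - (1 / 2) * ∫ x, v x ^ 2 * Real.log (v x ^ 2) * g x) :
    (1 / (2 * d)) * (∫ x, v x ^ 2 * Real.log (v x ^ 2) * g x) ^ 2
      + (1 / (8 * d)) * (d - ∫ x, ‖x‖ ^ 2 * v x ^ 2 * g x) ^ 2
    ≤ (∫ x, ‖gradient v x‖ ^ 2 * g x)
        - (1 / 2) * ∫ x, v x ^ 2 * Real.log (v x ^ 2) * g x :=
  stmt_9_general d hd g hg v hnorm hK himp
end
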